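/- arXiv:1505.07384 — 7 statements merged into one kernel-verified Lean document; each statement's English description precedes it below -/
import Mathlib

section
/- Let g be a positive function on [R*, +∞) that is Lipschitz with constant L > 0, and let R_{k+1} = R_k + g(R_k)/(2L) with R_0 ≥ R*. Then for every k ≥ 1, ∫_{R_{k−1}}^{R_k} g(t)^{−3} dt ≥ 1/(27 · L · g(R_k)²). -/
/-- For a positive `L`-Lipschitz function `g` on `[R*, ∞)` and the sequence
`R_{k+1} = R_k + g(R_k)/(2L)` with `R_0 ≥ R*`, for every `k ≥ 1` one has
`∫_{R_{k-1}}^{R_k} g(t)⁻³ dt ≥ 1/(27·L·g(R_k)²)`. -/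
theorem integral_lower_bound_on_step
    (Rstar L : ℝ) (g : ℝ → ℝ) (hL : 0 < L)
    (hg_pos : ∀ t, Rstar ≤ t → 0 < g t)
    (hg_lip : ∀ t1 t2, Rstar ≤ t1 → Rstar ≤ t2 → |g t1 - g t2| ≤ L * |t1 - t2|)
    (R : ℕ → ℝ) (hR0 : Rstar ≤ R 0)
    (hRrec : ∀ k, R (k + 1) = R k + g (R k) / (2 * L))
    (k : ℕ) (hk : 1 ≤ k) :
    1 / (27 * L * (g (R k)) ^ 2) ≤ ∫ t in R (k - 1)..R k, 1 / (g t) ^ 3 := by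
  -- all R n are ≥ Rstar
  have hRge : ∀ n, Rstar ≤ R n := by
    intro n
    induction n with
    | zero => exact hR0
    | succ m ih =>
      have hgm := hg_pos _ ih
      have : 0 < g (R m) / (2 * L) := by positivity
      rw [hRrec m]; linarith
  obtain ⟨j, rfl⟩ : ∃ j, k = j + 1 := ⟨k - 1, (Nat.succ_pred_eq_of_pos hk).symm⟩
  simp only [Nat.add_sub_cancel]
  set a := R j with ha
  set b := R (j + 1) with hb
  have hba : b = a + g a / (2 * L) := hRrec j
  have hga : 0 < g a := hg_pos _ (hRge j)
  have hgb : 0 < g b := hg_pos _ (hRge (j + 1))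
  have hstep : 0 < g a / (2 * L) := by positivity
  have hab : a ≤ b := by rw [hba]; linarith
  -- bounds on g on [a, b]
  have hbound : ∀ t ∈ Set.Icc a b, g t ≤ 3 / 2 * g a ∧ g a / 2 ≤ g t := by
    intro t ht
    have hta : Rstar ≤ t := le_trans (hRge j) ht.1
    have hlip := hg_lip t a hta (hRge j)
    have habs : |t - a| ≤ g a / (2 * L) := by
      rw [abs_of_nonneg (by linarith [ht.1])]
      have := ht.2
      rw [hba] at this
      linarith
    have h1 : |g t - g a| ≤ g a / 2 := by
      calc |g t - g a| ≤ L * |t - a| := hlip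
        _ ≤ L * (g a / (2 * L)) := by
            exact mul_le_mul_of_nonneg_left habs hL.le
        _ = g a / 2 := by field_simp
    rw [abs_le] at h1
    constructor <;> linarith [h1.1, h1.2]
  have hgab : g a ≤ 2 * g b := by
    have := (hbound b ⟨hab, le_refl b⟩).2
    linarith
  -- continuity / integrability
  have hcont : ContinuousOn (fun t => 1 / (g t) ^ 3) (Set.Icc a b) := by
    have hgc : ContinuousOn g (Set.Icc a b) :=
      (LipschitzOnWith.of_dist_le_mul (K := Real.toNNReal L) (fun x hx y hy => by
        rw [Real.dist_eq, Real.dist_eq, Real.coe_toNNReal L hL.le]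
        exact hg_lip x y (le_trans (hRge j) hx.1) (le_trans (hRge j) hy.1))).continuousOn
    apply ContinuousOn.div continuousOn_const (hgc.pow 3)
    intro x hx
    exact pow_ne_zero 3 (ne_of_gt (hg_pos x (le_trans (hRge j) hx.1)))
  have hint : IntervalIntegrable (fun t => 1 / (g t) ^ 3) MeasureTheory.volume a b := by
    apply ContinuousOn.intervalIntegrable
    rwa [Set.uIcc_of_le hab]
  -- compare with constant
  have hconst : (∫ t in a..b, (8 / (27 * (g a) ^ 3) : ℝ)) ≤ ∫ t in a..b, 1 / (g t) ^ 3 := by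
    apply intervalIntegral.integral_mono_on hab (intervalIntegrable_const) hint
    intro x hx
    have hx3 := (hbound x hx).1
    have hxpos : 0 < g x := hg_pos x (le_trans (hRge j) hx.1)
    rw [div_le_div_iff₀ (by positivity) (by positivity)]
    nlinarith [sq_nonneg (g x), sq_nonneg (g a), mul_pos hxpos hga,
      mul_pos (mul_pos hxpos hxpos) hga, mul_pos hxpos (mul_pos hga hga)]
  rw [intervalIntegral.integral_const, smul_eq_mul] at hconst
  have hval : (b - a) * (8 / (27 * (g a) ^ 3)) = 4 / (27 * L * (g a) ^ 2) := by
    rw [hba]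
    field_simp
    ring
  rw [hval] at hconst
  refine le_trans ?_ hconst
  rw [div_le_div_iff₀ (by positivity) (by positivity)]
  nlinarith [mul_nonneg (sub_nonneg.2 hgab) (by positivity : (0:ℝ) ≤ 2 * g b + g a), hL.le,
    mul_pos hga hgb, sq_nonneg (g a - g b)]
end

section
/- Let g be a positive function on [R*, +∞) that is Lipschitz with constant L > 0, and let R_{k+1} = R_k + g(R_k)/(2L) with R_0 ≥ R*. Then for every k ≥ 1, ∫_{R_0}^{R_{k+1}} g(t)^{−3} dt ≤ 109 · ∫_{R_0}^{R_k} g(t)^{−3} dt. -/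
open MeasureTheory

/-- For a positive `L`-Lipschitz function `g` on `[R*, ∞)` and the sequence
`R_{k+1} = R_k + g(R_k)/(2L)` with `R_0 ≥ R*`, for every `k ≥ 1` one has
`∫_{R_0}^{R_{k+1}} g(t)⁻³ dt ≤ 109 · ∫_{R_0}^{R_k} g(t)⁻³ dt`. -/
theorem integral_growth_bound
    (Rstar L : ℝ) (g : ℝ → ℝ) (hL : 0 < L)
    (hg_pos : ∀ t, Rstar ≤ t → 0 < g t)
    (hg_lip : ∀ t1 t2, Rstar ≤ t1 → Rstar ≤ t2 → |g t1 - g t2| ≤ L * |t1 - t2|)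
    (R : ℕ → ℝ) (hR0 : Rstar ≤ R 0)
    (hRrec : ∀ k, R (k + 1) = R k + g (R k) / (2 * L))
    (k : ℕ) (hk : 1 ≤ k) :
    ∫ t in (R 0)..R (k + 1), 1 / (g t) ^ 3 ≤ 109 * ∫ t in (R 0)..R k, 1 / (g t) ^ 3 := by
  -- basic facts about the sequence
  have hRst : ∀ n, Rstar ≤ R n := by
    intro n
    induction n with
    | zero => exact hR0
    | succ n ih =>
      have hg := hg_pos _ ih
      have : R n ≤ R (n + 1) := by
        rw [hRrec]
        have : 0 < g (R n) / (2 * L) := by positivity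
        linarith
      linarith
  have hlt : ∀ n, R n < R (n + 1) := by
    intro n
    have hg := hg_pos _ (hRst n)
    rw [hRrec]
    have : 0 < g (R n) / (2 * L) := by positivity
    linarith
  have hmono : Monotone R := monotone_nat_of_le_succ fun n => (hlt n).le
  -- continuity of g on [Rstar, ∞)
  have hcont : ContinuousOn g (Set.Ici Rstar) := by
    have hlip : LipschitzOnWith L.toNNReal g (Set.Ici Rstar) := by
      rw [lipschitzOnWith_iff_dist_le_mul]
      intro x hx y hy
      rw [Real.dist_eq, Real.dist_eq, Real.coe_toNNReal L hL.le]
      exact hg_lip x y hx hy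
    exact hlip.continuousOn
  -- integrability on any subinterval of [Rstar, ∞)
  have hint : ∀ a b, Rstar ≤ a → Rstar ≤ b →
      IntervalIntegrable (fun t => 1 / (g t) ^ 3) volume a b := by
    intro a b ha hb
    have hsub : Set.uIcc a b ⊆ Set.Ici Rstar := by
      intro t ht
      rw [Set.mem_uIcc] at ht
      rcases ht with h | h
      · exact le_trans ha h.1
      · exact le_trans hb h.1
    apply ContinuousOn.intervalIntegrable
    apply ContinuousOn.div continuousOn_const ((hcont.mono hsub).pow 3)
    intro t ht
    exact pow_ne_zero 3 (hg_pos t (hsub ht)).ne'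
  -- pointwise Lipschitz consequences
  have hlow : ∀ s t, Rstar ≤ s → Rstar ≤ t → g s - L * |t - s| ≤ g t := by
    intro s t hs ht
    have h := hg_lip s t hs ht
    have h1 := (abs_le.mp h).1
    have h2 : |s - t| = |t - s| := abs_sub_comm s t
    rw [h2] at h
    have := (abs_le.mp h).2
    linarith
  have hhigh : ∀ s t, Rstar ≤ s → Rstar ≤ t → g t ≤ g s + L * |t - s| := by
    intro s t hs ht
    have h := hg_lip t s ht hs
    have := (abs_le.mp h).2
    linarith
  -- decompose k = m + 1
  obtain ⟨m, rfl⟩ : ∃ m, k = m + 1 := ⟨k - 1, (Nat.succ_pred_eq_of_pos hk).symm⟩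
  set a := R m with ha_def
  set b := R (m + 1) with hb_def
  set c := R (m + 1 + 1) with hc_def
  have hab : a < b := hlt m
  have hbc : b < c := hlt (m + 1)
  have hRa : Rstar ≤ a := hRst m
  have hRb : Rstar ≤ b := hRst (m + 1)
  have hga : 0 < g a := hg_pos a hRa
  have hgb : 0 < g b := hg_pos b hRb
  have hstep1 : b - a = g a / (2 * L) := by rw [hb_def, hRrec]; ring
  have hstep2 : c - b = g b / (2 * L) := by rw [hc_def, hRrec]; ring
  -- g a ≤ 2 * g b
  have hab2 : g a ≤ 2 * g b := by
    have h := hlow a b hRa hRb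
    rw [abs_of_pos (by linarith : (0:ℝ) < b - a), hstep1] at h
    have : L * (g a / (2 * L)) = g a / 2 := by field_simp
    rw [this] at h
    linarith
  -- upper bound on ∫ over [b, c]
  have hBC : ∫ t in b..c, 1 / (g t) ^ 3 ≤ 4 / (L * (g b) ^ 2) := by
    have hpt : ∀ t ∈ Set.Icc b c, 1 / (g t) ^ 3 ≤ 8 / (g b) ^ 3 := by
      intro t ht
      have hRt : Rstar ≤ t := le_trans hRb ht.1
      have hgt : 0 < g t := hg_pos t hRt
      have hlb : g b / 2 ≤ g t := by
        have h := hlow b t hRb hRt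
        have habs : |t - b| ≤ g b / (2 * L) := by
          rw [abs_of_nonneg (by linarith [ht.1] : (0:ℝ) ≤ t - b)]
          linarith [ht.2, hstep2]
        have : L * |t - b| ≤ g b / 2 := by
          have := mul_le_mul_of_nonneg_left habs hL.le
          have heq : L * (g b / (2 * L)) = g b / 2 := by field_simp
          linarith [heq ▸ this]
        linarith
      rw [div_le_div_iff₀ (by positivity) (by positivity)]
      nlinarith [pow_le_pow_left₀ (by linarith : (0:ℝ) ≤ g b / 2) hlb 3, sq_nonneg (g t)]
    calc ∫ t in b..c, 1 / (g t) ^ 3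
        ≤ ∫ _t in b..c, 8 / (g b) ^ 3 := by
          apply intervalIntegral.integral_mono_on hbc.le (hint b c hRb (hRst _))
            intervalIntegrable_const hpt
      _ = (c - b) * (8 / (g b) ^ 3) := by rw [intervalIntegral.integral_const, smul_eq_mul]
      _ = 4 / (L * (g b) ^ 2) := by rw [hstep2]; field_simp; ring
  -- lower bound on ∫ over [a, b]
  have hAB : 1 / (27 * L * (g b) ^ 2) ≤ ∫ t in a..b, 1 / (g t) ^ 3 := by
    have hpt : ∀ t ∈ Set.Icc a b, 8 / (27 * (g a) ^ 3) ≤ 1 / (g t) ^ 3 := by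
      intro t ht
      have hRt : Rstar ≤ t := le_trans hRa ht.1
      have hgt : 0 < g t := hg_pos t hRt
      have hub : g t ≤ 3 / 2 * g a := by
        have h := hhigh a t hRa hRt
        have habs : |t - a| ≤ g a / (2 * L) := by
          rw [abs_of_nonneg (by linarith [ht.1] : (0:ℝ) ≤ t - a)]
          linarith [ht.2, hstep1]
        have h2 : L * |t - a| ≤ g a / 2 := by
          have := mul_le_mul_of_nonneg_left habs hL.le
          have heq : L * (g a / (2 * L)) = g a / 2 := by field_simp
          linarith [heq ▸ this]
        linarith
      rw [div_le_div_iff₀ (by positivity) (by positivity)]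
      nlinarith [pow_le_pow_left₀ hgt.le hub 3, sq_nonneg (g a)]
    have hmain : ∫ t in a..b, 8 / (27 * (g a) ^ 3) ≤ ∫ t in a..b, 1 / (g t) ^ 3 := by
      apply intervalIntegral.integral_mono_on hab.le intervalIntegrable_const
        (hint a b hRa hRb) hpt
    have hval : ∫ _t in a..b, 8 / (27 * (g a) ^ 3) = (b - a) * (8 / (27 * (g a) ^ 3)) := by
      rw [intervalIntegral.integral_const, smul_eq_mul]
    have hcomp : 1 / (27 * L * (g b) ^ 2) ≤ (b - a) * (8 / (27 * (g a) ^ 3)) := by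
      rw [hstep1]
      have : g a / (2 * L) * (8 / (27 * (g a) ^ 3)) = 4 / (27 * L * (g a) ^ 2) := by
        field_simp; ring
      rw [this, div_le_div_iff₀ (by positivity) (by positivity)]
      nlinarith [mul_le_mul hab2 hab2 hga.le (by linarith : (0:ℝ) ≤ 2 * g b), hL.le,
        mul_pos hga hgb]
    linarith [hval ▸ hmain]
  -- nonnegativity of the head integral
  have hhead : 0 ≤ ∫ t in (R 0)..a, 1 / (g t) ^ 3 := by
    apply intervalIntegral.integral_nonneg (hmono (Nat.zero_le m))
    intro t ht
    have : 0 < g t := hg_pos t (le_trans hR0 ht.1)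
    positivity
  -- combine
  have hsplit1 : ∫ t in (R 0)..b, 1 / (g t) ^ 3
      = (∫ t in (R 0)..a, 1 / (g t) ^ 3) + ∫ t in a..b, 1 / (g t) ^ 3 :=
    (intervalIntegral.integral_add_adjacent_intervals (hint _ _ hR0 hRa)
      (hint _ _ hRa hRb)).symm
  have hsplit2 : ∫ t in (R 0)..c, 1 / (g t) ^ 3
      = (∫ t in (R 0)..b, 1 / (g t) ^ 3) + ∫ t in b..c, 1 / (g t) ^ 3 :=
    (intervalIntegral.integral_add_adjacent_intervals (hint _ _ hR0 hRb)
      (hint _ _ hRb (hRst _))).symm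
  have hABtail : ∫ t in a..b, 1 / (g t) ^ 3 ≤ ∫ t in (R 0)..b, 1 / (g t) ^ 3 := by
    rw [hsplit1]; linarith
  have h108 : ∫ t in b..c, 1 / (g t) ^ 3 ≤ 108 * ∫ t in (R 0)..b, 1 / (g t) ^ 3 := by
    have : (4 : ℝ) / (L * (g b) ^ 2) = 108 * (1 / (27 * L * (g b) ^ 2)) := by
      field_simp; ring
    calc ∫ t in b..c, 1 / (g t) ^ 3 ≤ 4 / (L * (g b) ^ 2) := hBC
      _ = 108 * (1 / (27 * L * (g b) ^ 2)) := this
      _ ≤ 108 * ∫ t in a..b, 1 / (g t) ^ 3 := by linarith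
      _ ≤ 108 * ∫ t in (R 0)..b, 1 / (g t) ^ 3 := by linarith
  rw [hsplit2]
  linarith
end

section
/- (Saint-Venant type induction claim) Let N be a natural number (N < +∞) and let y_0, ..., y_N be nonnegative real numbers with y_k ≤ y_{k+1} for all k < N. Suppose there are nonnegative constants c*, c**, nonnegative numbers g_0, ..., g_{N−1}, and nonnegative numbers Q_0, ..., Q_N with Q_k ≤ Q_{k+1}, such that for every k < N: y_k ≤ c*·(y_{k+1} − y_k) + c**·g_k·(y_{k+1} − y_k)^{3/2} + (1/2)Q_k, and (1/2)Q_k ≥ c*·(Q_{k+1} − Q_k) + c**·g_k·(Q_{k+1} − Q_k)^{3/2}. If y_N ≤ Q_N, then y_k ≤ Q_k for every k ≤ N. -/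
/-- Saint-Venant type induction claim (Section 5): if nonnegative nondecreasing numbers
`y_k`, `Q_k` satisfy `y_k ≤ c*(y_{k+1}-y_k) + c**·g_k·(y_{k+1}-y_k)^{3/2} + Q_k/2` and
`Q_k/2 ≥ c*(Q_{k+1}-Q_k) + c**·g_k·(Q_{k+1}-Q_k)^{3/2}` for all `k < N`, and `y_N ≤ Q_N`,
then `y_k ≤ Q_k` for all `k ≤ N`. -/
theorem saint_venant_induction
    (N : ℕ) (y Q gk : ℕ → ℝ) (cstar cstarstar : ℝ)
    (hcstar : 0 ≤ cstar) (hcstarstar : 0 ≤ cstarstar)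
    (hy_nonneg : ∀ k ≤ N, 0 ≤ y k)
    (hy_mono : ∀ k < N, y k ≤ y (k + 1))
    (hg_nonneg : ∀ k < N, 0 ≤ gk k)
    (hQ_nonneg : ∀ k ≤ N, 0 ≤ Q k)
    (hQ_mono : ∀ k < N, Q k ≤ Q (k + 1))
    (hy : ∀ k < N, y k ≤ cstar * (y (k + 1) - y k) +
        cstarstar * gk k * (y (k + 1) - y k) ^ ((3 : ℝ) / 2) + (1 / 2) * Q k)
    (hQ : ∀ k < N, cstar * (Q (k + 1) - Q k) +
        cstarstar * gk k * (Q (k + 1) - Q k) ^ ((3 : ℝ) / 2) ≤ (1 / 2) * Q k)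
    (hN : y N ≤ Q N) :
    ∀ k ≤ N, y k ≤ Q k := by
  have key : ∀ d, d ≤ N → y (N - d) ≤ Q (N - d) := by
    intro d
    induction d with
    | zero => intro _; simpa using hN
    | succ d ih =>
      intro hd
      have hd' : d ≤ N := Nat.le_of_succ_le hd
      have ihd := ih hd'
      set k := N - (d + 1) with hk
      have hkN : k < N := by omega
      have hk1 : k + 1 = N - d := by omega
      by_contra hcon
      push_neg at hcon
      have hQk := hQ_nonneg k hkN.le
      have hyk := hy_nonneg k hkN.le
      have hdy : 0 ≤ y (k + 1) - y k := sub_nonneg.mpr (hy_mono k hkN)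
      have hle : y (k + 1) - y k ≤ Q (k + 1) - Q k := by
        have : y (k + 1) ≤ Q (k + 1) := by rw [hk1]; exact ihd
        linarith
      have hmono : cstar * (y (k + 1) - y k) +
          cstarstar * gk k * (y (k + 1) - y k) ^ ((3 : ℝ) / 2) ≤
          cstar * (Q (k + 1) - Q k) +
          cstarstar * gk k * (Q (k + 1) - Q k) ^ ((3 : ℝ) / 2) := by
        have h1 : cstar * (y (k + 1) - y k) ≤ cstar * (Q (k + 1) - Q k) :=
          mul_le_mul_of_nonneg_left hle hcstar
        have h2 : (y (k + 1) - y k) ^ ((3 : ℝ) / 2) ≤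
            (Q (k + 1) - Q k) ^ ((3 : ℝ) / 2) :=
          Real.rpow_le_rpow hdy hle (by norm_num)
        have h3 : 0 ≤ cstarstar * gk k := mul_nonneg hcstarstar (hg_nonneg k hkN)
        nlinarith [mul_le_mul_of_nonneg_left h2 h3]
      have := hy k hkN
      have := hQ k hkN
      linarith
  intro k hk
  have := key (N - k) (Nat.sub_le N k)
  rwa [Nat.sub_sub_self hk] at this
end

section
/- Let g be a positive function on [R*, +∞) that is Lipschitz with constant L > 0, let R_{k+1} = R_k + g(R_k)/(2L) with R_0 ≥ R*, and set I_k = ∫_{R_0}^{R_k} g(t)^{−3} dt. Assume that (∫_{R_{k−1}}^{R_k} g(t)^{−3} dt)/(1 + I_k) → 0 as k → ∞. Then for any constants c* ≥ 0, c** ≥ 0, C > 0, defining Q_k = 2C(1 + I_k), there exists k_0 such that for all k ≥ k_0: c*·(Q_{k+1} − Q_k) + c**·g(R_k)·(Q_{k+1} − Q_k)^{3/2} ≤ (1/2)Q_k. -/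
set_option maxHeartbeats 1000000 in
/-- Verification of the hypothesis (XX2) of the Saint-Venant induction claim for
`Q_k = 2C(1 + ∫_{R_0}^{R_k} g⁻³)`: if `(∫_{R_{k-1}}^{R_k} g⁻³)/(1 + ∫_{R_0}^{R_k} g⁻³) → 0`,
then for all large `k`,
`c*(Q_{k+1} − Q_k) + c**·g(R_k)·(Q_{k+1} − Q_k)^{3/2} ≤ Q_k/2`. -/
theorem saint_venant_Q_condition
    (Rstar L : ℝ) (g : ℝ → ℝ) (hL : 0 < L)
    (hg_pos : ∀ t, Rstar ≤ t → 0 < g t)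
    (hg_lip : ∀ t1 t2, Rstar ≤ t1 → Rstar ≤ t2 → |g t1 - g t2| ≤ L * |t1 - t2|)
    (R : ℕ → ℝ) (hR0 : Rstar ≤ R 0)
    (hRrec : ∀ k, R (k + 1) = R k + g (R k) / (2 * L))
    (hlim : Filter.Tendsto
      (fun k : ℕ => (∫ t in R k..R (k + 1), 1 / (g t) ^ 3) /
        (1 + ∫ t in (R 0)..R (k + 1), 1 / (g t) ^ 3))
      Filter.atTop (nhds 0))
    (cstar cstarstar C : ℝ) (hcstar : 0 ≤ cstar) (hcstarstar : 0 ≤ cstarstar) (hC : 0 < C) :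
    ∃ k0 : ℕ, ∀ k ≥ k0,
      cstar * ((2 * C * (1 + ∫ t in (R 0)..R (k + 1), 1 / (g t) ^ 3)) -
          (2 * C * (1 + ∫ t in (R 0)..R k, 1 / (g t) ^ 3))) +
        cstarstar * g (R k) * ((2 * C * (1 + ∫ t in (R 0)..R (k + 1), 1 / (g t) ^ 3)) -
          (2 * C * (1 + ∫ t in (R 0)..R k, 1 / (g t) ^ 3))) ^ ((3 : ℝ) / 2) ≤
      (1 / 2) * (2 * C * (1 + ∫ t in (R 0)..R k, 1 / (g t) ^ 3)) := by
  have hRst : ∀ k, Rstar ≤ R k := by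
    intro k
    induction k with
    | zero => exact hR0
    | succ n ih =>
      have hg : 0 < g (R n) / (2 * L) := by
        have := hg_pos _ ih; positivity
      rw [hRrec]
      linarith
  have hstep : ∀ k, R k ≤ R (k + 1) := by
    intro k
    have hg : 0 < g (R k) / (2 * L) := by
      have := hg_pos _ (hRst k); positivity
    rw [hRrec]
    linarith
  have hmono : Monotone R := monotone_nat_of_le_succ hstep
  set f : ℝ → ℝ := fun t => 1 / g t ^ 3 with hfdef
  have hgc : ContinuousOn g (Set.Ici Rstar) := by
    have hlip : LipschitzOnWith ⟨L, hL.le⟩ g (Set.Ici Rstar) := by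
      apply LipschitzOnWith.of_dist_le_mul
      intro x hx y hy
      rw [Real.dist_eq, Real.dist_eq]
      exact hg_lip x y hx hy
    exact hlip.continuousOn
  have hfc : ContinuousOn f (Set.Ici Rstar) := by
    apply ContinuousOn.div continuousOn_const (hgc.pow 3)
    intro t ht
    exact pow_ne_zero 3 (hg_pos t ht).ne'
  have hint : ∀ a b, Rstar ≤ a → Rstar ≤ b →
      IntervalIntegrable f MeasureTheory.volume a b := by
    intro a b ha hb
    apply (hfc.mono ?_).intervalIntegrable
    intro x hx
    exact le_trans (le_min ha hb) hx.1
  have hf_nn : ∀ t, Rstar ≤ t → 0 ≤ f t := by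
    intro t ht
    exact le_of_lt (one_div_pos.mpr (pow_pos (hg_pos t ht) 3))
  set M : ℝ := Real.sqrt (4 / L) with hMdef
  have hM : 0 ≤ M := Real.sqrt_nonneg _
  have hrpow_nn : (0:ℝ) ≤ (2 * C) ^ ((3:ℝ)/2) := Real.rpow_nonneg (by positivity) _
  set K : ℝ := 2 * C * cstar + cstarstar * (2 * C) ^ ((3:ℝ)/2) * M with hKdef
  have hK : 0 ≤ K := by positivity
  set δ : ℝ := C / (2 * (K + C)) with hδdef
  have hKC : 0 < K + C := by linarith
  have hδ : 0 < δ := by positivity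
  have hδeq : δ * (2 * (K + C)) = C := by
    rw [hδdef]; field_simp
  clear_value M K δ
  have hδhalf : δ ≤ 1 / 2 := by nlinarith [hδeq, hK, hKC]
  rw [Metric.tendsto_atTop] at hlim
  obtain ⟨k0, hk0⟩ := hlim δ hδ
  refine ⟨k0, fun k hk => ?_⟩
  set a : ℝ := ∫ t in R k..R (k + 1), f t with hadef
  set Ik : ℝ := ∫ t in (R 0)..(R k), f t with hIkdef
  set Ik1 : ℝ := ∫ t in (R 0)..(R (k + 1)), f t with hIk1def
  have ha_nn : 0 ≤ a :=
    intervalIntegral.integral_nonneg (hstep k)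
      (fun t ht => hf_nn t ((hRst k).trans ht.1))
  have hIk_nn : 0 ≤ Ik :=
    intervalIntegral.integral_nonneg (hmono (Nat.zero_le k))
      (fun t ht => hf_nn t (hR0.trans ht.1))
  have hadd : Ik1 = Ik + a :=
    (intervalIntegral.integral_add_adjacent_intervals
      (hint _ _ (hRst 0) (hRst k)) (hint _ _ (hRst k) (hRst (k + 1)))).symm
  have hgk : 0 < g (R k) := hg_pos _ (hRst k)
  -- pointwise upper bound on f on [R k, R (k+1)]
  have hub : ∀ t ∈ Set.Icc (R k) (R (k + 1)), f t ≤ 8 / g (R k) ^ 3 := by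
    intro t ht
    have htst : Rstar ≤ t := (hRst k).trans ht.1
    have hlip := hg_lip t (R k) htst (hRst k)
    have h1 : |t - R k| = t - R k := abs_of_nonneg (by linarith [ht.1])
    have h2 : t - R k ≤ g (R k) / (2 * L) := by
      have := ht.2; rw [hRrec] at this; linarith
    have h3 : |g t - g (R k)| ≤ g (R k) / 2 := by
      rw [h1] at hlip
      have : L * (t - R k) ≤ L * (g (R k) / (2 * L)) :=
        mul_le_mul_of_nonneg_left h2 hL.le
      have he : L * (g (R k) / (2 * L)) = g (R k) / 2 := by
        field_simp
      linarith [hlip]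
    have h4 : g (R k) / 2 ≤ g t := by
      have := abs_le.mp h3; linarith [this.1]
    have h5 : (0:ℝ) < g (R k) / 2 := by positivity
    show 1 / g t ^ 3 ≤ 8 / g (R k) ^ 3
    have hgt : (0:ℝ) < g t := lt_of_lt_of_le h5 h4
    rw [div_le_div_iff₀ (pow_pos hgt 3) (by positivity)]
    nlinarith [pow_le_pow_left₀ h5.le h4 3, pow_pos h5 3]
  have hab : a ≤ 8 / g (R k) ^ 3 * (R (k + 1) - R k) := by
    have hmon := intervalIntegral.integral_mono_on (hstep k)
      (hint _ _ (hRst k) (hRst (k + 1))) intervalIntegrable_const hub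
    rwa [intervalIntegral.integral_const, smul_eq_mul, mul_comm] at hmon
  have hga : g (R k) ^ 2 * a ≤ 4 / L := by
    have hR1 : R (k + 1) - R k = g (R k) / (2 * L) := by rw [hRrec]; ring
    rw [hR1] at hab
    have h8 : g (R k) ^ 2 * (8 / g (R k) ^ 3 * (g (R k) / (2 * L))) = 4 / L := by
      field_simp; ring
    calc g (R k) ^ 2 * a ≤ g (R k) ^ 2 * (8 / g (R k) ^ 3 * (g (R k) / (2 * L))) :=
          mul_le_mul_of_nonneg_left hab (sq_nonneg _)
      _ = 4 / L := h8
  have hkd : |a / (1 + Ik1)| < δ := by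
    have h := hk0 k hk
    rw [Real.dist_eq, sub_zero] at h
    exact h
  clear_value a Ik Ik1
  have hsqrt : g (R k) * Real.sqrt a ≤ M := by
    have h1 : (g (R k) * Real.sqrt a) ^ 2 ≤ 4 / L := by
      rw [mul_pow, Real.sq_sqrt ha_nn]; exact hga
    have h2 : 0 ≤ g (R k) * Real.sqrt a := by positivity
    calc g (R k) * Real.sqrt a = Real.sqrt ((g (R k) * Real.sqrt a) ^ 2) :=
          (Real.sqrt_sq h2).symm
      _ ≤ Real.sqrt (4 / L) := Real.sqrt_le_sqrt h1
      _ = M := hMdef.symm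
  have hr2 : a ^ ((3:ℝ)/2) = Real.sqrt a ^ 3 := by
    rw [Real.sqrt_eq_rpow, ← Real.rpow_natCast (a ^ ((1:ℝ)/2)) 3, ← Real.rpow_mul ha_nn]
    norm_num
  have hmain : cstar * (2 * C * a) + cstarstar * g (R k) * (2 * C * a) ^ ((3:ℝ)/2)
      ≤ K * a := by
    have e1 : (2 * C * a) ^ ((3:ℝ)/2) = (2 * C) ^ ((3:ℝ)/2) * (Real.sqrt a ^ 3) := by
      rw [Real.mul_rpow (by positivity) ha_nn, hr2]
    rw [e1]
    have e2 : g (R k) * Real.sqrt a ^ 3 ≤ M * a := by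
      have e3 : g (R k) * Real.sqrt a ^ 3 = (g (R k) * Real.sqrt a) * a := by
        rw [show Real.sqrt a ^ 3 = Real.sqrt a ^ 2 * Real.sqrt a from by ring,
          Real.sq_sqrt ha_nn]
        ring
      rw [e3]
      exact mul_le_mul_of_nonneg_right hsqrt ha_nn
    have e4 : 0 ≤ cstarstar * (2 * C) ^ ((3:ℝ)/2) := mul_nonneg hcstarstar hrpow_nn
    rw [hKdef]
    calc cstar * (2 * C * a) +
          cstarstar * g (R k) * ((2 * C) ^ ((3:ℝ)/2) * Real.sqrt a ^ 3)
        = cstar * (2 * C * a) +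
          (cstarstar * (2 * C) ^ ((3:ℝ)/2)) * (g (R k) * Real.sqrt a ^ 3) := by ring
      _ ≤ cstar * (2 * C * a) +
          (cstarstar * (2 * C) ^ ((3:ℝ)/2)) * (M * a) :=
            add_le_add le_rfl (mul_le_mul_of_nonneg_left e2 e4)
      _ = (2 * C * cstar + cstarstar * (2 * C) ^ ((3:ℝ)/2) * M) * a := by ring
  have h1Ik1 : 0 < 1 + Ik1 := by rw [hadd]; linarith
  have haδ : a ≤ δ * (1 + Ik + a) := by
    have hq_nn : 0 ≤ a / (1 + Ik1) := div_nonneg ha_nn h1Ik1.le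
    rw [abs_of_nonneg hq_nn, div_lt_iff₀ h1Ik1] at hkd
    rw [hadd] at hkd
    have he : δ * (1 + (Ik + a)) = δ * (1 + Ik + a) := by ring
    linarith
  have h2δ : a ≤ 2 * δ * (1 + Ik) := by
    nlinarith [mul_le_mul_of_nonneg_right hδhalf ha_nn]
  have hfinal : K * a ≤ C * (1 + Ik) := by
    have h1Ik : (0:ℝ) ≤ 1 + Ik := by linarith
    nlinarith [mul_le_mul_of_nonneg_left h2δ hK,
      mul_nonneg (mul_nonneg hδ.le hC.le) h1Ik,
      mul_le_mul_of_nonneg_right (le_of_eq hδeq) h1Ik]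
  have hdiff : (2 * C * (1 + Ik1)) - (2 * C * (1 + Ik)) = 2 * C * a := by
    rw [hadd]; ring
  rw [hdiff]
  calc cstar * (2 * C * a) + cstarstar * g (R k) * (2 * C * a) ^ ((3:ℝ)/2)
      ≤ K * a := hmain
    _ ≤ C * (1 + Ik) := hfinal
    _ = 1 / 2 * (2 * C * (1 + Ik)) := by ring
end

section
/- Let ξ(x1, x2) = Ψ(ε · ln(γ(g(x1) − x2)/x2)) for R* < x1 and 0 < x2 < g(x1). Then there is a constant C(ε), which may depend on ε, γ, sup|Ψ'| and sup|g'| (one may take C(ε) = c·ε·(γ + e^{1/ε})/γ), such that |∂ξ/∂x_i(x)| ≤ C(ε)/g(x1) for i = 1, 2 and all x in the domain of ξ. -/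
lemma derivPsi_zero_left (Ψ : ℝ → ℝ) (hΨ : ContDiff ℝ (⊤ : ℕ∞) Ψ)
    (hΨ0 : ∀ t ≤ (0 : ℝ), Ψ t = 0) : ∀ t ≤ (0:ℝ), deriv Ψ t = 0 := by
  intro t ht
  have h1 : UniqueDiffWithinAt ℝ (Set.Iic t) t := uniqueDiffOn_Iic t t (Set.mem_Iic.2 le_rfl)
  have h2 : derivWithin Ψ (Set.Iic t) t = deriv Ψ t :=
    ((hΨ.differentiable (by simp) t).hasDerivAt.hasDerivWithinAt).derivWithin h1
  rw [← h2]
  have h3 : derivWithin Ψ (Set.Iic t) t = derivWithin (fun _ => (0:ℝ)) (Set.Iic t) t :=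
    derivWithin_congr (fun y hy => hΨ0 y (le_trans hy ht)) (hΨ0 t ht)
  rw [h3]
  exact congrFun (derivWithin_const (𝕜 := ℝ) (Set.Iic t) (0:ℝ)) t

lemma derivPsi_zero_right (Ψ : ℝ → ℝ) (hΨ : ContDiff ℝ (⊤ : ℕ∞) Ψ)
    (hΨ1 : ∀ t ≥ (1 : ℝ), Ψ t = 1) : ∀ t ≥ (1:ℝ), deriv Ψ t = 0 := by
  intro t ht
  have h1 : UniqueDiffWithinAt ℝ (Set.Ici t) t := uniqueDiffOn_Ici t t (Set.mem_Ici.2 le_rfl)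
  have h2 : derivWithin Ψ (Set.Ici t) t = deriv Ψ t :=
    ((hΨ.differentiable (by simp) t).hasDerivAt.hasDerivWithinAt).derivWithin h1
  rw [← h2]
  have h3 : derivWithin Ψ (Set.Ici t) t = derivWithin (fun _ => (1:ℝ)) (Set.Ici t) t :=
    derivWithin_congr (fun y hy => hΨ1 y (le_trans ht hy)) (hΨ1 t ht)
  rw [h3]
  exact congrFun (derivWithin_const (𝕜 := ℝ) (Set.Ici t) (1:ℝ)) t

set_option maxHeartbeats 1000000

/-- First part of estimate (4.4) of Lemma 4.1: for
`ξ(x₁,x₂) = Ψ(ε·ln(γ(g(x₁) − x₂)/x₂))` there is a constant `C(ε)` (which may depend on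
`ε`, `γ`, `sup|Ψ'|` and `sup|g'|`) such that `|∂ξ/∂xᵢ(x)| ≤ C(ε)/g(x₁)` for `i = 1, 2`. -/
theorem grad_xi_second_estimate
    (Rstar γ MΨ Mg : ℝ) (hγ : 0 < γ)
    (g Ψ : ℝ → ℝ) (hg : ContDiff ℝ (⊤ : ℕ∞) g)
    (hg_pos : ∀ t, Rstar ≤ t → 0 < g t)
    (hΨ : ContDiff ℝ (⊤ : ℕ∞) Ψ)
    (hΨ0 : ∀ t ≤ (0 : ℝ), Ψ t = 0) (hΨ1 : ∀ t ≥ (1 : ℝ), Ψ t = 1)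
    (hΨ' : ∀ t, |deriv Ψ t| ≤ MΨ) (hg' : ∀ t, |deriv g t| ≤ Mg)
    (ε : ℝ) (hε : 0 < ε) :
    ∃ C : ℝ,
      ∀ x : ℝ × ℝ, Rstar < x.1 → 0 < x.2 → x.2 < g x.1 →
        |fderiv ℝ (fun y : ℝ × ℝ => Ψ (ε * Real.log (γ * (g y.1 - y.2) / y.2))) x (1, 0)| ≤
          C / g x.1 ∧
        |fderiv ℝ (fun y : ℝ × ℝ => Ψ (ε * Real.log (γ * (g y.1 - y.2) / y.2))) x (0, 1)| ≤
          C / g x.1 := by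
  set E := Real.exp (1/ε) with hE
  set K := γ + E with hKdef
  have hEpos : 0 < E := Real.exp_pos _
  have hKpos : 0 < K := by positivity
  clear_value E K
  have hMΨ : 0 ≤ MΨ := le_trans (abs_nonneg _) (hΨ' 0)
  have hMg : 0 ≤ Mg := le_trans (abs_nonneg _) (hg' 0)
  refine ⟨MΨ * ε * (Mg * K + (K + K / γ)), ?_⟩
  intro x hx1 hx2 hx2g
  have ha : 0 < g x.1 := hg_pos x.1 hx1.le
  have hd : 0 < g x.1 - x.2 := by linarith
  -- eventual equality with the log-difference form
  have hopen : IsOpen {y : ℝ × ℝ | 0 < y.2 ∧ y.2 < g y.1} := by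
    have hc : Continuous fun y : ℝ × ℝ => g y.1 := hg.continuous.comp continuous_fst
    exact (isOpen_lt continuous_const continuous_snd).inter (isOpen_lt continuous_snd hc)
  have hev : (fun y : ℝ × ℝ => Ψ (ε * Real.log (γ * (g y.1 - y.2) / y.2)))
      =ᶠ[nhds x] (fun y : ℝ × ℝ =>
        Ψ (ε * (Real.log γ + Real.log (g y.1 - y.2) - Real.log y.2))) := by
    filter_upwards [hopen.mem_nhds ⟨hx2, hx2g⟩] with y hy
    have hb : 0 < y.2 := hy.1
    have hdy : 0 < g y.1 - y.2 := by have := hy.2; linarith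
    rw [Real.log_div (by positivity) hb.ne', Real.log_mul hγ.ne' hdy.ne']
  rw [hev.fderiv_eq]
  -- compute the derivative
  set u : ℝ := ε * (Real.log γ + Real.log (g x.1 - x.2) - Real.log x.2) with hu
  have hgd : HasDerivAt g (deriv g x.1) x.1 := (hg.differentiable (by simp) x.1).hasDerivAt
  have h1 : HasFDerivAt (fun y : ℝ × ℝ => g y.1)
      (deriv g x.1 • ContinuousLinearMap.fst ℝ ℝ ℝ) x :=
    hgd.comp_hasFDerivAt x hasFDerivAt_fst
  have h2 : HasFDerivAt (fun y : ℝ × ℝ => g y.1 - y.2)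
      (deriv g x.1 • ContinuousLinearMap.fst ℝ ℝ ℝ - ContinuousLinearMap.snd ℝ ℝ ℝ) x :=
    h1.sub hasFDerivAt_snd
  have h3 : HasFDerivAt (fun y : ℝ × ℝ => Real.log (g y.1 - y.2))
      ((g x.1 - x.2)⁻¹ • (deriv g x.1 • ContinuousLinearMap.fst ℝ ℝ ℝ -
        ContinuousLinearMap.snd ℝ ℝ ℝ)) x :=
    ((Real.hasDerivAt_log hd.ne').comp_hasFDerivAt x h2 :)
  have h4 : HasFDerivAt (fun y : ℝ × ℝ => Real.log y.2)
      (x.2⁻¹ • ContinuousLinearMap.snd ℝ ℝ ℝ) x :=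
    (Real.hasDerivAt_log hx2.ne').comp_hasFDerivAt x hasFDerivAt_snd
  have h5 : HasFDerivAt
      (fun y : ℝ × ℝ => Real.log γ + Real.log (g y.1 - y.2) - Real.log y.2)
      (((g x.1 - x.2)⁻¹ • (deriv g x.1 • ContinuousLinearMap.fst ℝ ℝ ℝ -
        ContinuousLinearMap.snd ℝ ℝ ℝ)) - x.2⁻¹ • ContinuousLinearMap.snd ℝ ℝ ℝ) x := by
    have := (h3.const_add (Real.log γ)).sub h4
    exact this
  have h6 := h5.const_mul ε
  have hΨd : HasDerivAt Ψ (deriv Ψ u) u := (hΨ.differentiable (by simp) u).hasDerivAt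
  have hF : HasFDerivAt
      (fun y : ℝ × ℝ => Ψ (ε * (Real.log γ + Real.log (g y.1 - y.2) - Real.log y.2)))
      (deriv Ψ u • (ε • ((g x.1 - x.2)⁻¹ • (deriv g x.1 • ContinuousLinearMap.fst ℝ ℝ ℝ -
        ContinuousLinearMap.snd ℝ ℝ ℝ) - x.2⁻¹ • ContinuousLinearMap.snd ℝ ℝ ℝ))) x :=
    hΨd.comp_hasFDerivAt x h6
  rw [hF.fderiv]
  -- evaluate
  have e1 : (deriv Ψ u • (ε • ((g x.1 - x.2)⁻¹ • (deriv g x.1 • ContinuousLinearMap.fst ℝ ℝ ℝ -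
        ContinuousLinearMap.snd ℝ ℝ ℝ) - x.2⁻¹ • ContinuousLinearMap.snd ℝ ℝ ℝ))) (1, 0)
      = deriv Ψ u * (ε * ((g x.1 - x.2)⁻¹ * deriv g x.1)) := by
    simp [ContinuousLinearMap.smul_apply]
  have e2 : (deriv Ψ u • (ε • ((g x.1 - x.2)⁻¹ • (deriv g x.1 • ContinuousLinearMap.fst ℝ ℝ ℝ -
        ContinuousLinearMap.snd ℝ ℝ ℝ) - x.2⁻¹ • ContinuousLinearMap.snd ℝ ℝ ℝ))) (0, 1)
      = deriv Ψ u * (ε * (-(g x.1 - x.2)⁻¹ - x.2⁻¹)) := by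
    simp [ContinuousLinearMap.smul_apply]
  rw [e1, e2]
  -- now case analysis on u
  have hq : u = ε * Real.log (γ * (g x.1 - x.2) / x.2) := by
    rw [Real.log_div (by positivity) hx2.ne', Real.log_mul hγ.ne' hd.ne']
  clear_value u
  set q : ℝ := γ * (g x.1 - x.2) / x.2 with hqdef
  have hqpos : 0 < q := by positivity
  clear_value q
  by_cases hcase1 : q ≤ 1
  · have hu0 : u ≤ 0 := by
      rw [hq]
      have : Real.log q ≤ 0 := Real.log_nonpos hqpos.le hcase1
      nlinarith
    have hz : deriv Ψ u = 0 := derivPsi_zero_left Ψ hΨ hΨ0 u hu0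
    rw [hz]
    simp only [zero_mul, abs_zero]
    constructor <;> positivity
  · by_cases hcase2 : E ≤ q
    · have hu1 : (1:ℝ) ≤ u := by
        rw [hq]
        have h := Real.log_le_log hEpos hcase2
        rw [hE, Real.log_exp] at h
        calc (1:ℝ) = ε * (1/ε) := by field_simp
        _ ≤ ε * Real.log q := by nlinarith
      have hz : deriv Ψ u = 0 := derivPsi_zero_right Ψ hΨ hΨ1 u hu1
      rw [hz]
      simp only [zero_mul, abs_zero]
      constructor <;> positivity
    · -- main case: 1 < q < E
      push_neg at hcase1 hcase2
      have hb1 : x.2 < γ * (g x.1 - x.2) := by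
        rw [hqdef] at hcase1
        rw [lt_div_iff₀ hx2] at hcase1
        linarith
      have hb2 : γ * (g x.1 - x.2) < E * x.2 := by
        rw [hqdef] at hcase2
        rw [div_lt_iff₀ hx2] at hcase2
        linarith
      have hbK : γ * g x.1 < K * x.2 := by
        have : γ * (g x.1 - x.2) + γ * x.2 < E * x.2 + γ * x.2 := by linarith
        calc γ * g x.1 = γ * (g x.1 - x.2) + γ * x.2 := by ring
        _ < E * x.2 + γ * x.2 := this
        _ = K * x.2 := by rw [hKdef]; ring
      have hdK : g x.1 < K * (g x.1 - x.2) := by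
        have h' : K * x.2 < K * (γ * (g x.1 - x.2)) := mul_lt_mul_of_pos_left hb1 hKpos
        have hr : K * (γ * (g x.1 - x.2)) = γ * (K * (g x.1 - x.2)) := by ring
        have h'' : γ * g x.1 < γ * (K * (g x.1 - x.2)) := by linarith
        exact lt_of_mul_lt_mul_left h'' hγ.le
      have hdinv : (g x.1 - x.2)⁻¹ ≤ K / g x.1 := by
        rw [inv_eq_one_div, div_le_div_iff₀ hd ha]
        linarith
      have hbinv : x.2⁻¹ ≤ K / (γ * g x.1) := by
        rw [inv_eq_one_div, div_le_div_iff₀ hx2 (by positivity)]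
        linarith
      have hΨu := hΨ' u
      have hgx := hg' x.1
      constructor
      · have hstep : |deriv Ψ u * (ε * ((g x.1 - x.2)⁻¹ * deriv g x.1))|
            ≤ MΨ * (ε * (K / g x.1 * Mg)) := by
          rw [abs_mul, abs_mul, abs_mul]
          rw [abs_of_pos hε, abs_of_pos (inv_pos.2 hd)]
          have h1' : (g x.1 - x.2)⁻¹ * |deriv g x.1| ≤ K / g x.1 * Mg :=
            mul_le_mul hdinv hgx (abs_nonneg _) (by positivity)
          have h2' : ε * ((g x.1 - x.2)⁻¹ * |deriv g x.1|) ≤ ε * (K / g x.1 * Mg) :=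
            mul_le_mul_of_nonneg_left h1' hε.le
          exact mul_le_mul hΨu h2' (by positivity) hMΨ
        refine le_trans hstep ?_
        have heq : MΨ * (ε * (K / g x.1 * Mg)) = MΨ * ε * (Mg * K) / g x.1 := by ring
        rw [heq]
        exact div_le_div_of_nonneg_right
          (by nlinarith [mul_nonneg (mul_nonneg hMΨ hε.le) (add_nonneg hKpos.le (div_nonneg hKpos.le hγ.le))]) ha.le
      · have habs : |(-(g x.1 - x.2)⁻¹ - x.2⁻¹)| ≤ K / g x.1 + K / (γ * g x.1) := by
          have heq2 : |(-(g x.1 - x.2)⁻¹ - x.2⁻¹)| = (g x.1 - x.2)⁻¹ + x.2⁻¹ := by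
            rw [show (-(g x.1 - x.2)⁻¹ - x.2⁻¹) = -((g x.1 - x.2)⁻¹ + x.2⁻¹) by ring,
              abs_neg, abs_of_pos (by positivity)]
          rw [heq2]
          exact add_le_add hdinv hbinv
        have hstep : |deriv Ψ u * (ε * (-(g x.1 - x.2)⁻¹ - x.2⁻¹))|
            ≤ MΨ * (ε * (K / g x.1 + K / (γ * g x.1))) := by
          rw [abs_mul, abs_mul, abs_of_pos hε]
          have h2' : ε * |(-(g x.1 - x.2)⁻¹ - x.2⁻¹)| ≤ ε * (K / g x.1 + K / (γ * g x.1)) :=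
            mul_le_mul_of_nonneg_left habs hε.le
          exact mul_le_mul hΨu h2' (by positivity) hMΨ
        refine le_trans hstep ?_
        have heq : MΨ * (ε * (K / g x.1 + K / (γ * g x.1))) = MΨ * ε * (K + K / γ) / g x.1 := by
          field_simp
        rw [heq]
        exact div_le_div_of_nonneg_right
          (by nlinarith [mul_nonneg (mul_nonneg hMΨ hε.le) (mul_nonneg hMg hKpos.le)]) ha.le
end

section
/- (Poincaré inequality with k-independent constant) Let g be a positive function on [R*, +∞) that is Lipschitz with constant L > 0, let R_{k+1} = R_k + g(R_k)/(2L) with R_0 ≥ R*, and set ω_k = {(x1, x2) : R_k < x1 < R_{k+1}, |x2| < g(x1)}. There exists a constant c, independent of k, g, L and u, such that for every continuously differentiable function u on the closure of ω_k satisfying u(x1, g(x1)) = u(x1, −g(x1)) = 0 for all x1 ∈ [R_k, R_{k+1}]: ∫_{ω_k} |u(x)|² dx ≤ c·g(R_k)²·∫_{ω_k} |∇u(x)|² dx. -/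
/-- The slice `ω = {(x₁,x₂) : a < x₁ < b, |x₂| < g(x₁)}` of the outlet. -/
def outletSlice (g : ℝ → ℝ) (a b : ℝ) : Set (ℝ × ℝ) :=
  {x : ℝ × ℝ | a < x.1 ∧ x.1 < b ∧ |x.2| < g x.1}

/-! On each vertical segment `{x₁} × (-g x₁, g x₁)` the function `u` vanishes at the lower end,
so the fundamental theorem of calculus and Cauchy–Schwarz give the one-dimensional Poincaré
inequality `∫ u² ≤ (2 g x₁)² ∫ (∂₂u)²` on the segment; Tonelli integrates this over `x₁`.
On `ω_k` the Lipschitz bound and the step `R_{k+1} - R_k = g(R_k)/(2L)` keep `g` within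
`g(R_k)/2` of `g(R_k)`, so `2 g ≤ 3 g(R_k)` and `c = 9` works. -/

open MeasureTheory Set Topology
open scoped ENNReal

/- The derivative within `K` need not be unique at boundary points of `K`, so `fderivWithin` is
not known to be continuous on `K`; the local derivatives provided by `ContDiffWithinAt` are
bounded near each point instead, and compactness globalises the bound. -/
theorem ContDiffOn.exists_bound_fderiv_interior {E F : Type*} [NormedAddCommGroup E]
    [NormedSpace ℝ E] [NormedAddCommGroup F] [NormedSpace ℝ F] {u : E → F} {K : Set E}
    (hK : IsCompact K) (hu : ContDiffOn ℝ 1 u K) :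
    ∃ M, ∀ x ∈ interior K, ‖fderiv ℝ u x‖ ≤ M := by
  let P : Set E → Prop := fun s => ∃ M, ∀ x ∈ s ∩ interior K, ‖fderiv ℝ u x‖ ≤ M
  suffices P K by
    obtain ⟨M, hM⟩ := this
    exact ⟨M, fun x hx => hM x ⟨interior_subset hx, hx⟩⟩
  refine hK.induction_on ⟨0, by simp⟩
    (fun s t hst ⟨M, hM⟩ => ⟨M, fun x hx => hM x ⟨hst hx.1, hx.2⟩⟩)
    (fun s t ⟨M, hM⟩ ⟨N, hN⟩ => ⟨max M N, ?_⟩) fun x hx => ?_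
  · rintro y ⟨hs | ht, hy⟩
    exacts [(hM y ⟨hs, hy⟩).trans (le_max_left _ _), (hN y ⟨ht, hy⟩).trans (le_max_right _ _)]
  · obtain ⟨v, hv, -, -, f', hf'v, hf'⟩ :=
      (contDiffWithinAt_succ_iff_hasFDerivWithinAt' (n := 0) (by simp)).1 (by simpa using hu x hx)
    rw [insert_eq_of_mem hx] at hv
    refine ⟨v ∩ f' ⁻¹' Metric.ball (f' x) 1,
      Filter.inter_mem hv (hf'.continuousWithinAt (Metric.ball_mem_nhds _ one_pos)),
      ‖f' x‖ + 1, ?_⟩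
    rintro y ⟨⟨hyv, hyball⟩, hyK⟩
    rw [((hf'v y hyv).hasFDerivAt (mem_interior_iff_mem_nhds.1 hyK)).fderiv]
    have := norm_le_norm_add_norm_sub' (f' y) (f' x)
    rw [mem_preimage, mem_ball_iff_norm] at hyball
    linarith

theorem sq_integral_abs_le_mul_integral_sq {α : Type*} [MeasurableSpace α] {μ : Measure α}
    [IsFiniteMeasure μ] {φ : α → ℝ} (hφ : MemLp φ 2 μ) :
    (∫ x, |φ x| ∂μ) ^ 2 ≤ μ.real univ * ∫ x, φ x ^ 2 ∂μ := by
  have h := integral_mul_le_Lp_mul_Lq_of_nonneg Real.HolderConjugate.two_two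
    (ae_of_all _ fun x => abs_nonneg (φ x)) (ae_of_all _ fun _ => zero_le_one)
    (by simpa using hφ.norm) (memLp_const (1 : ℝ))
  simp only [mul_one, integral_const, smul_eq_mul, Real.rpow_two, sq_abs,
    ← Real.sqrt_eq_rpow] at h
  rw [← Real.sqrt_mul (integral_nonneg fun x => sq_nonneg _), Real.le_sqrt
    (integral_nonneg fun x => abs_nonneg _) (by positivity)] at h
  linarith

theorem sq_le_mul_integral_sq_of_hasDerivAt {f f' : ℝ → ℝ} {a b y : ℝ}
    (hf : ContinuousOn f (Icc a b)) (hderiv : ∀ t ∈ Ioo a b, HasDerivAt f (f' t) t)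
    (hf' : MemLp f' 2 (volume.restrict (Ioo a b))) (ha : f a = 0) (hy : y ∈ Icc a b) :
    f y ^ 2 ≤ (b - a) * ∫ t in Ioo a b, f' t ^ 2 := by
  have hf'y : MemLp f' 2 (volume.restrict (Ioo a y)) :=
    hf'.mono_measure (Measure.restrict_mono (Ioo_subset_Ioo_right hy.2) le_rfl)
  have hFTC : f y = ∫ t in Ioo a y, f' t := by
    rw [← integral_Ioc_eq_integral_Ioo, ← intervalIntegral.integral_of_le hy.1,
      intervalIntegral.integral_eq_sub_of_hasDerivAt_of_le hy.1
        (hf.mono (Icc_subset_Icc_right hy.2))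
        (fun t ht => hderiv t (Ioo_subset_Ioo_right hy.2 ht))
        ((intervalIntegrable_iff_integrableOn_Ioo_of_le hy.1).2 (hf'y.integrable one_le_two)),
      ha, sub_zero]
  calc f y ^ 2 ≤ (∫ t in Ioo a y, |f' t|) ^ 2 := by
        rw [hFTC, ← sq_abs]
        exact pow_le_pow_left₀ (abs_nonneg _) (abs_integral_le_integral_abs) 2
    _ ≤ (y - a) * ∫ t in Ioo a y, f' t ^ 2 := by
        simpa [Real.volume_real_Ioo_of_le hy.1] using sq_integral_abs_le_mul_integral_sq hf'y
    _ ≤ (b - a) * ∫ t in Ioo a b, f' t ^ 2 :=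
        mul_le_mul (by linarith [hy.2])
          (setIntegral_mono_set hf'.integrable_sq (ae_of_all _ fun t => sq_nonneg _)
            (Ioo_subset_Ioo_right hy.2).eventuallyLE)
          (integral_nonneg fun t => sq_nonneg _) (by linarith [hy.1, hy.2])

theorem lintegral_sq_le_of_hasDerivAt {f f' : ℝ → ℝ} {a b : ℝ} (hab : a ≤ b)
    (hf : ContinuousOn f (Icc a b)) (hderiv : ∀ t ∈ Ioo a b, HasDerivAt f (f' t) t)
    (hf' : MemLp f' 2 (volume.restrict (Ioo a b))) (ha : f a = 0) :
    ∫⁻ t in Ioo a b, ENNReal.ofReal (f t ^ 2) ≤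
      ENNReal.ofReal ((b - a) ^ 2) * ∫⁻ t in Ioo a b, ENNReal.ofReal (f' t ^ 2) := by
  rw [← ofReal_integral_eq_lintegral_ofReal hf'.integrable_sq (ae_of_all _ fun t => sq_nonneg _),
    ← ENNReal.ofReal_mul (sq_nonneg _)]
  calc ∫⁻ t in Ioo a b, ENNReal.ofReal (f t ^ 2)
      ≤ ∫⁻ _ in Ioo a b, ENNReal.ofReal ((b - a) * ∫ s in Ioo a b, f' s ^ 2) :=
        setLIntegral_mono' measurableSet_Ioo fun t ht => ENNReal.ofReal_le_ofReal
          (sq_le_mul_integral_sq_of_hasDerivAt hf hderiv hf' ha (Ioo_subset_Icc_self ht))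
    _ = ENNReal.ofReal ((b - a) ^ 2 * ∫ s in Ioo a b, f' s ^ 2) := by
        rw [setLIntegral_const, Real.volume_Ioo, ← ENNReal.ofReal_mul' (sub_nonneg.2 hab)]
        ring_nf

theorem lintegral_sq_vertical_le {u : ℝ × ℝ → ℝ} {x₁ c d M : ℝ} (hcd : c ≤ d)
    (hu : ContinuousOn (fun y => u (x₁, y)) (Icc c d))
    (hdiff : ∀ y ∈ Ioo c d, DifferentiableAt ℝ u (x₁, y))
    (hM : ∀ y ∈ Ioo c d, ‖fderiv ℝ u (x₁, y)‖ ≤ M) (hc : u (x₁, c) = 0) :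
    ∫⁻ y in Ioo c d, ENNReal.ofReal (u (x₁, y) ^ 2) ≤
      ENNReal.ofReal ((d - c) ^ 2) *
        ∫⁻ y in Ioo c d, ENNReal.ofReal (‖fderiv ℝ u (x₁, y)‖ ^ 2) := by
  set f' : ℝ → ℝ := fun y => fderiv ℝ u (x₁, y) (0, 1)
  have hf'_le (y : ℝ) : |f' y| ≤ ‖fderiv ℝ u (x₁, y)‖ := by
    simpa using (fderiv ℝ u (x₁, y)).le_opNorm (0, 1)
  have hf' : MemLp f' 2 (volume.restrict (Ioo c d)) :=
    .of_bound ((measurable_fderiv_apply_const ℝ u _).comp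
      measurable_prodMk_left).aestronglyMeasurable M
      ((ae_restrict_iff' measurableSet_Ioo).2 (ae_of_all _ fun y hy => (hf'_le y).trans (hM y hy)))
  refine (lintegral_sq_le_of_hasDerivAt hcd hu (fun y hy => ?_) hf' hc).trans
    (mul_le_mul_right (lintegral_mono fun y => ENNReal.ofReal_le_ofReal ?_) _)
  · exact (hdiff y hy).hasFDerivAt.comp_hasDerivAt y
      ((hasDerivAt_const y x₁).prodMk (hasDerivAt_id y))
  · rw [← sq_abs]
    exact pow_le_pow_left₀ (abs_nonneg _) (hf'_le y) 2

theorem integral_le_mul_integral_of_lintegral_ofReal_le {α : Type*} [MeasurableSpace α]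
    {μ : Measure α} {f h : α → ℝ} {c : ℝ} (hc : 0 ≤ c) (hf : 0 ≤ᵐ[μ] f)
    (hfm : AEStronglyMeasurable f μ) (hh : Integrable h μ) (hh0 : 0 ≤ᵐ[μ] h)
    (hle : ∫⁻ x, ENNReal.ofReal (f x) ∂μ ≤ ENNReal.ofReal c * ∫⁻ x, ENNReal.ofReal (h x) ∂μ) :
    ∫ x, f x ∂μ ≤ c * ∫ x, h x ∂μ := by
  rw [← ofReal_integral_eq_lintegral_ofReal hh hh0, ← ENNReal.ofReal_mul hc] at hle
  rw [integral_eq_lintegral_of_nonneg_ae hf hfm]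
  exact ENNReal.toReal_le_of_le_ofReal (mul_nonneg hc (integral_nonneg_of_ae hh0)) hle

section outletSlice

variable {g : ℝ → ℝ} {a b : ℝ}

theorem mk_mem_outletSlice {t y : ℝ} :
    (t, y) ∈ outletSlice g a b ↔ t ∈ Ioo a b ∧ y ∈ Ioo (-g t) (g t) := by
  simp [outletSlice, abs_lt, and_assoc]

theorem isOpen_outletSlice (hg : ContinuousOn g (Ioo a b)) : IsOpen (outletSlice g a b) := by
  have : outletSlice g a b = Ioo a b ×ˢ univ ∩ (fun x : ℝ × ℝ => |x.2| - g x.1) ⁻¹' Iio 0 := by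
    ext ⟨t, y⟩
    simp [outletSlice, and_assoc]
  rw [this]
  exact ContinuousOn.isOpen_inter_preimage
    ((continuous_abs.comp continuous_snd).continuousOn.sub
      (hg.comp continuous_fst.continuousOn fun x hx => hx.1))
    (isOpen_Ioo.prod isOpen_univ) isOpen_Iio

theorem outletSlice_subset_prod {H : ℝ} (hgH : ∀ t ∈ Ioo a b, g t ≤ H) :
    outletSlice g a b ⊆ Ioo a b ×ˢ Ioo (-H) H := by
  rintro ⟨t, y⟩ hx
  obtain ⟨ht, hy⟩ := mk_mem_outletSlice.1 hx
  have := hgH t ht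
  exact ⟨ht, by linarith [hy.1], by linarith [hy.2]⟩

theorem mk_mem_closure_outletSlice {t y : ℝ} (ht : t ∈ Ioo a b) (hgt : 0 < g t)
    (hy : y ∈ Icc (-g t) (g t)) : (t, y) ∈ closure (outletSlice g a b) := by
  rw [← closure_Ioo (by linarith : -g t ≠ g t)] at hy
  exact map_mem_closure (continuous_const.prodMk continuous_id) hy
    fun y hy => mk_mem_outletSlice.2 ⟨ht, hy⟩

theorem lintegral_outletSlice (hω : MeasurableSet (outletSlice g a b)) {Φ : ℝ × ℝ → ℝ≥0∞}
    (hΦ : AEMeasurable Φ (volume.restrict (outletSlice g a b))) :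
    ∫⁻ x in outletSlice g a b, Φ x = ∫⁻ t in Ioo a b, ∫⁻ y in Ioo (-g t) (g t), Φ (t, y) := by
  rw [← lintegral_indicator hω, Measure.volume_eq_prod,
    lintegral_prod _ (by rw [← Measure.volume_eq_prod]; exact (aemeasurable_indicator_iff hω).2 hΦ),
    ← lintegral_indicator measurableSet_Ioo]
  congr 1 with t
  by_cases ht : t ∈ Ioo a b
  · rw [indicator_of_mem ht, ← lintegral_indicator measurableSet_Ioo]
    congr 1 with y
    by_cases hy : y ∈ Ioo (-g t) (g t)
    · rw [indicator_of_mem (mk_mem_outletSlice.2 ⟨ht, hy⟩), indicator_of_mem hy]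
    · rw [indicator_of_notMem (fun h => hy (mk_mem_outletSlice.1 h).2), indicator_of_notMem hy]
  · rw [indicator_of_notMem ht]
    simp only [indicator_of_notMem (fun h => ht (mk_mem_outletSlice.1 h).1), lintegral_zero]

end outletSlice

theorem setIntegral_outletSlice_sq_le {g : ℝ → ℝ} {a b H : ℝ} {u : ℝ × ℝ → ℝ}
    (hg : ContinuousOn g (Ioo a b)) (hg0 : ∀ t ∈ Ioo a b, 0 < g t)
    (hgH : ∀ t ∈ Ioo a b, g t ≤ H) (hu : ContDiffOn ℝ 1 u (closure (outletSlice g a b)))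
    (hu0 : ∀ t ∈ Ioo a b, u (t, -g t) = 0) :
    ∫ x in outletSlice g a b, u x ^ 2 ≤
      (2 * H) ^ 2 *
        ∫ x in outletSlice g a b, ‖fderivWithin ℝ u (closure (outletSlice g a b)) x‖ ^ 2 := by
  set ω := outletSlice g a b
  have hω : IsOpen ω := isOpen_outletSlice hg
  have hωb : Bornology.IsBounded ω :=
    ((Metric.isBounded_Ioo a b).prod (Metric.isBounded_Ioo (-H) H)).subset
      (outletSlice_subset_prod hgH)
  obtain ⟨M, hM⟩ := hu.exists_bound_fderiv_interior hωb.isCompact_closure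
  replace hM : ∀ x ∈ ω, ‖fderiv ℝ u x‖ ≤ M := fun x hx => hM x (hω.subset_interior_closure hx)
  have hnhds {x} (hx : x ∈ ω) : closure ω ∈ 𝓝 x :=
    Filter.mem_of_superset (hω.mem_nhds hx) subset_closure
  have hdiff {x} (hx : x ∈ ω) : DifferentiableAt ℝ u x :=
    ((hu.differentiableOn one_ne_zero) x (subset_closure hx)).differentiableAt (hnhds hx)
  have hslice : ∀ t ∈ Ioo a b, ∫⁻ y in Ioo (-g t) (g t), ENNReal.ofReal (u (t, y) ^ 2) ≤
      ENNReal.ofReal ((2 * H) ^ 2) *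
        ∫⁻ y in Ioo (-g t) (g t), ENNReal.ofReal (‖fderiv ℝ u (t, y)‖ ^ 2) := by
    intro t ht
    have hmem {y} (hy : y ∈ Ioo (-g t) (g t)) : (t, y) ∈ ω := mk_mem_outletSlice.2 ⟨ht, hy⟩
    refine (lintegral_sq_vertical_le (by linarith [hg0 t ht])
      (hu.continuousOn.comp (continuous_const.prodMk continuous_id).continuousOn
        fun y hy => mk_mem_closure_outletSlice ht (hg0 t ht) hy)
      (fun y hy => hdiff (hmem hy)) (fun y hy => hM _ (hmem hy)) (hu0 t ht)).trans ?_
    gcongr <;> linarith [hg0 t ht, hgH t ht]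
  have hmeas : Measurable fun x => ‖fderiv ℝ u x‖ ^ 2 := (measurable_fderiv ℝ u).norm.pow_const 2
  have hu_meas : AEStronglyMeasurable (fun x => u x ^ 2) (volume.restrict ω) :=
    ((hu.continuousOn.mono subset_closure).aestronglyMeasurable hω.measurableSet).pow 2
  have hfw : ∫ x in ω, ‖fderivWithin ℝ u (closure ω) x‖ ^ 2 = ∫ x in ω, ‖fderiv ℝ u x‖ ^ 2 :=
    setIntegral_congr_fun hω.measurableSet fun x hx => by
      simp only [fderivWithin_of_mem_nhds (hnhds hx)]
  rw [hfw]
  refine integral_le_mul_integral_of_lintegral_ofReal_le (sq_nonneg _)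
    (ae_of_all _ fun x => sq_nonneg _) hu_meas
    (Measure.integrableOn_of_bounded hωb.measure_lt_top.ne hmeas.aestronglyMeasurable (M := M ^ 2)
      ((ae_restrict_iff' hω.measurableSet).2 (ae_of_all _ fun x hx => ?_)))
    (ae_of_all _ fun x => sq_nonneg _) ?_
  · rw [Real.norm_of_nonneg (sq_nonneg _)]
    exact pow_le_pow_left₀ (norm_nonneg _) (hM x hx) 2
  rw [lintegral_outletSlice hω.measurableSet hu_meas.aemeasurable.ennreal_ofReal,
    lintegral_outletSlice hω.measurableSet hmeas.ennreal_ofReal.aemeasurable,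
    ← lintegral_const_mul' _ _ ENNReal.ofReal_ne_top]
  exact setLIntegral_mono' measurableSet_Ioo hslice

/-- Lemma 5.2 (Poincaré inequality with `k`-independent constant): there is a universal
constant `c` such that for every positive `L`-Lipschitz `g`, the sequence
`R_{k+1} = R_k + g(R_k)/(2L)` and every `C¹` function `u` on the closure of
`ω_k = {R_k < x₁ < R_{k+1}, |x₂| < g(x₁)}` vanishing on the lateral boundaries
`x₂ = ±g(x₁)`, one has `∫_{ω_k} u² ≤ c·g(R_k)²·∫_{ω_k} |∇u|²`. -/
theorem poincare_uniform_constant :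
    ∃ c : ℝ, 0 < c ∧
      ∀ (Rstar L : ℝ) (g : ℝ → ℝ) (R : ℕ → ℝ) (k : ℕ) (u : ℝ × ℝ → ℝ),
        0 < L →
        (∀ t, Rstar ≤ t → 0 < g t) →
        (∀ t1 t2, Rstar ≤ t1 → Rstar ≤ t2 → |g t1 - g t2| ≤ L * |t1 - t2|) →
        Rstar ≤ R 0 →
        (∀ j, R (j + 1) = R j + g (R j) / (2 * L)) →
        ContDiffOn ℝ 1 u (closure (outletSlice g (R k) (R (k + 1)))) →
        (∀ x1 ∈ Set.Icc (R k) (R (k + 1)), u (x1, g x1) = 0 ∧ u (x1, -(g x1)) = 0) →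
        ∫ x in outletSlice g (R k) (R (k + 1)), (u x) ^ 2 ≤
          c * (g (R k)) ^ 2 *
            ∫ x in outletSlice g (R k) (R (k + 1)),
              ‖fderivWithin ℝ u (closure (outletSlice g (R k) (R (k + 1)))) x‖ ^ 2 := by
  refine ⟨9, by norm_num, fun Rstar L g R k u hL hg0 hlip hR0 hR hu hbc => ?_⟩
  have hRge (j : ℕ) : Rstar ≤ R j := by
    induction j with
    | zero => exact hR0
    | succ j ih =>
      have := div_pos (hg0 _ ih) (mul_pos two_pos hL)
      linarith [hR j]
  have hgk := hg0 _ (hRge k)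
  have hclose : ∀ t ∈ Ioo (R k) (R (k + 1)), |g t - g (R k)| ≤ g (R k) / 2 := fun t ht =>
    calc |g t - g (R k)| ≤ L * |t - R k| := hlip _ _ ((hRge k).trans ht.1.le) (hRge k)
      _ ≤ L * (g (R k) / (2 * L)) := by
          rw [abs_of_pos (sub_pos.2 ht.1)]
          gcongr
          linarith [ht.2, hR k]
      _ = g (R k) / 2 := by field_simp
  have hcont : ContinuousOn g (Ioo (R k) (R (k + 1))) :=
    (LipschitzOnWith.of_dist_le' fun s hs t ht =>
      hlip s t ((hRge k).trans hs.1.le) ((hRge k).trans ht.1.le)).continuousOn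
  convert setIntegral_outletSlice_sq_le (H := 3 / 2 * g (R k)) hcont
    (fun t ht => by linarith [abs_le.1 (hclose t ht)])
    (fun t ht => by linarith [abs_le.1 (hclose t ht)]) hu
    (fun t ht => (hbc t (Ioo_subset_Icc_self ht)).2) using 2
  ring
end

section
/- Let L > 0 and let h : [0, 1] → ℝ satisfy h(0) = 2L and the Lipschitz condition |h(s) − h(s')| ≤ L|s − s'| for all s, s' ∈ [0, 1]. Then: (a) L ≤ 2L − L·y1 ≤ h(y1) ≤ 2L + L·y1 ≤ 3L for all y1 ∈ [0, 1]; and (b) the domain D_h = {(y1, y2) : 0 < y1 < 1, |y2| < h(y1)} is star-shaped with respect to the origin, i.e. for every point p = (y1, y2) ∈ D_h and every t ∈ (0, 1], the point (t·y1, t·y2) belongs to D_h. -/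
/-- Geometric core of the proof of Lemma 5.4: if `h(0) = 2L` and `h` is `L`-Lipschitz on
`[0,1]`, then (a) `L ≤ 2L − L·y₁ ≤ h(y₁) ≤ 2L + L·y₁ ≤ 3L` on `[0,1]`, and (b) the domain
`D_h = {0 < y₁ < 1, |y₂| < h(y₁)}` is star-shaped with respect to the origin. -/
theorem transformed_domain_star_shaped
    (L : ℝ) (hL : 0 < L) (h : ℝ → ℝ) (hh0 : h 0 = 2 * L)
    (hlip : ∀ s ∈ Set.Icc (0 : ℝ) 1, ∀ s' ∈ Set.Icc (0 : ℝ) 1, |h s - h s'| ≤ L * |s - s'|) :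
    (∀ y1 ∈ Set.Icc (0 : ℝ) 1,
        L ≤ 2 * L - L * y1 ∧ 2 * L - L * y1 ≤ h y1 ∧
          h y1 ≤ 2 * L + L * y1 ∧ 2 * L + L * y1 ≤ 3 * L) ∧
    (∀ p : ℝ × ℝ, 0 < p.1 → p.1 < 1 → |p.2| < h p.1 →
        ∀ t ∈ Set.Ioc (0 : ℝ) 1,
          0 < t * p.1 ∧ t * p.1 < 1 ∧ |t * p.2| < h (t * p.1)) := by
  have key : ∀ y1 ∈ Set.Icc (0 : ℝ) 1, |h y1 - 2 * L| ≤ L * y1 := by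
    intro y1 hy1
    have := hlip y1 hy1 0 ⟨le_refl 0, zero_le_one⟩
    rw [hh0] at this
    rwa [sub_zero, abs_of_nonneg hy1.1] at this
  constructor
  · intro y1 hy1
    have hb := abs_le.mp (key y1 hy1)
    obtain ⟨h0, h1⟩ := hy1
    constructor
    · nlinarith
    refine ⟨by linarith [hb.1], by linarith [hb.2], by nlinarith⟩
  · intro p hp0 hp1 hpy t ht
    obtain ⟨ht0, ht1⟩ := ht
    refine ⟨mul_pos ht0 hp0, by nlinarith, ?_⟩
    have hp1mem : p.1 ∈ Set.Icc (0 : ℝ) 1 := ⟨le_of_lt hp0, le_of_lt hp1⟩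
    have htp1mem : t * p.1 ∈ Set.Icc (0 : ℝ) 1 := by
      constructor
      · positivity
      · nlinarith
    have hlipv := hlip p.1 hp1mem (t * p.1) htp1mem
    have habs : |p.1 - t * p.1| = p.1 * (1 - t) := by
      rw [abs_of_nonneg (by nlinarith)]; ring
    rw [habs] at hlipv
    have hle := (abs_le.mp hlipv).2
    -- h(t*p.1) ≥ h(p.1) - L * p.1 * (1-t)
    have hbig : L * p.1 ≤ h p.1 := by
      have hb := abs_le.mp (key p.1 hp1mem)
      nlinarith [hb.1]
    have hy2 : |t * p.2| = t * |p.2| := by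
      rw [abs_mul, abs_of_pos ht0]
    rw [hy2]
    have h1 : t * |p.2| < t * h p.1 := by
      exact (mul_lt_mul_iff_right₀ ht0).mpr hpy
    -- h(t*p.1) ≥ h p.1 - L*p.1*(1-t) ≥ t * h p.1 since h p.1 ≥ L ≥ L * p.1
    nlinarith [abs_nonneg p.2, mul_nonneg (sub_nonneg.mpr ht1) (sub_nonneg.mpr hbig)]
end
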